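/- arXiv:1105.4565 — 2 statements merged into one kernel-verified Lean document; each statement's English description precedes it below -/
import Mathlib

section
/- Let E be a finite-dimensional complex inner product space and a, b ∈ End(E) with a² = b² = 0, ab+ba = -2 Id, and b* = -a. Set E₀ := range a. Then E decomposes as an internal direct sum E = E₀ ⊕ b(E₀), and moreover b(E₀) is the orthogonal complement of E₀. -/
/-- With E₀ = range a, E decomposes as E₀ ⊕ b(E₀), and b(E₀) is the orthogonal
complement of E₀. -/
theorem stmt5 {E : Type*} [NormedAddCommGroup E] [InnerProductSpace ℂ E]
    [FiniteDimensional ℂ E] (a b : E →ₗ[ℂ] E)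
    (ha : a * a = 0) (hb : b * b = 0)
    (hab : a * b + b * a = (-2 : ℂ) • 1)
    (hadj : LinearMap.adjoint b = -a) :
    IsCompl (LinearMap.range a) ((LinearMap.range a).map b) ∧
      (LinearMap.range a).map b = (LinearMap.range a)ᗮ := by
  have haa : ∀ v, a (a v) = 0 := fun v => by
    have := congrArg (fun f => f v) ha; simpa using this
  have hle : (LinearMap.range a).map b ≤ (LinearMap.range a)ᗮ := by
    rintro _ ⟨_, ⟨u, rfl⟩, rfl⟩
    rw [Submodule.mem_orthogonal]
    rintro _ ⟨v, rfl⟩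
    rw [← LinearMap.adjoint_inner_left b, hadj]
    simp [haa v]
  have hsup : (LinearMap.range a) ⊔ (LinearMap.range a).map b = ⊤ := by
    rw [eq_top_iff]
    intro x _
    have hx : a (b x) + b (a x) = (-2 : ℂ) • x := by
      have := congrArg (fun f => f x) hab
      simpa [Module.End.mul_apply] using this
    have hx2 : x = (-(1/2 : ℂ)) • (a (b x)) + (-(1/2 : ℂ)) • (b (a x)) := by
      rw [← smul_add, hx, smul_smul]
      norm_num
    rw [hx2]
    exact Submodule.add_mem _
      (Submodule.smul_mem _ _ (Submodule.mem_sup_left ⟨b x, rfl⟩))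
      (Submodule.smul_mem _ _ (Submodule.mem_sup_right ⟨a x, ⟨x, rfl⟩, rfl⟩))
  have heq : (LinearMap.range a).map b = (LinearMap.range a)ᗮ := by
    refine le_antisymm hle fun x hx => ?_
    have hxm : x ∈ (LinearMap.range a) ⊔ (LinearMap.range a).map b := hsup ▸ trivial
    obtain ⟨u, hu, v, hv, huv⟩ := Submodule.mem_sup.mp hxm
    have hvo : v ∈ (LinearMap.range a)ᗮ := hle hv
    have hu0 : u = 0 := by
      have huo : u ∈ (LinearMap.range a)ᗮ := by
        have : u = x - v := by rw [← huv]; abel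
        rw [this]; exact Submodule.sub_mem _ hx hvo
      have := (Submodule.orthogonal_disjoint (LinearMap.range a)).le_bot ⟨hu, huo⟩
      simpa using this
    rw [← huv, hu0, zero_add]; exact hv
  refine ⟨?_, heq⟩
  rw [heq]
  exact Submodule.isCompl_orthogonal_of_hasOrthogonalProjection
end

section
/- Under the relations a² = b² = 0, ab + ba = -2·Id on End(E), the map x ↦ -½(a x) restricted to b(E₀) (where E₀ = range a) is a two-sided inverse to b : E₀ → b(E₀); in particular b restricts to a linear isomorphism from E₀ onto b(E₀). -/
/-- Under a² = b² = 0, ab + ba = -2 Id, the map x ↦ -½ (a x) is a two-sided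
inverse to b : E₀ → b(E₀), where E₀ = range a; in particular b restricts to a
linear isomorphism from E₀ onto b(E₀). -/
theorem stmt6 {E : Type*} [AddCommGroup E] [Module ℂ E]
    (a b : E →ₗ[ℂ] E)
    (ha : a * a = 0) (hb : b * b = 0)
    (hab : a * b + b * a = (-2 : ℂ) • 1) :
    (∀ v ∈ LinearMap.range a, (-(1 / 2 : ℂ)) • a (b v) = v) ∧
    (∀ x ∈ (LinearMap.range a).map b, b ((-(1 / 2 : ℂ)) • a x) = x) := by
  have key : ∀ v ∈ LinearMap.range a, a (b v) = (-2 : ℂ) • v := by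
    rintro _ ⟨u, rfl⟩
    have h1 : (a * b + b * a) (a u) = ((-2 : ℂ) • (1 : E →ₗ[ℂ] E)) (a u) := by
      rw [hab]
    have h2 : a (a u) = 0 := by
      have := congrArg (fun f : E →ₗ[ℂ] E => f u) ha
      simpa using this
    simpa [LinearMap.add_apply, Module.End.mul_apply, h2] using h1
  constructor
  · intro v hv
    rw [key v hv, smul_smul]
    norm_num
  · rintro _ ⟨v, hv, rfl⟩
    rw [map_smul, key v hv, map_smul, smul_smul]
    norm_num
end
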